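/- arXiv:1809.07599 — 5 statements merged into one kernel-verified Lean document; each statement's English description precedes it below -/
import Mathlib

section
/- Let $d, n \ge 1$, let each $f_i\colon \mathbb{R}^d \to \mathbb{R}$ ($i \in \{1,\dots,n\}$) be $L$-smooth, and let $f = \frac{1}{n}\sum_{i=1}^n f_i$ be $\mu$-strongly convex ($\mu>0$) with minimizer $x^\star$ and minimum value $f^\star$. Let $x, \tilde{x} \in \mathbb{R}^d$, set $m = \tilde{x} - x$, let $\eta > 0$, and suppose $\frac{1}{n}\sum_{i=1}^n \|\nabla f_i(x)\|^2 \le G^2$. Then $\frac{1}{n}\sum_{i=1}^n \big\|\tilde{x} - \eta \nabla f_i(x) - x^\star\big\|^2 \le \left(1 - \frac{\eta\mu}{2}\right)\|\tilde{x} - x^\star\|^2 + \eta^2 G^2 - \eta\,(f(x) - f^\star) + \eta(\mu + 2L)\|m\|^2$. -/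
open Finset Filter Topology

/-!
Averaging the smoothness inequalities of the `f i` shows that `F` lies below the quadratic
model at `x` built from the averaged gradient `ḡ`, while strong convexity puts `F` above the
quadratic model built from `∇F x`; two such models touching at `x` have the same slope, so
`∇F x = ḡ`. Expanding the averaged square gives `‖x̃ - x⋆‖² - 2η⟪ḡ, x̃ - x⋆⟫ + η²G²`. The
inner product splits along `x̃ - x⋆ = (x - x⋆) + m`: strong convexity bounds `⟪ḡ, x - x⋆⟫`
from below, smoothness of `F` at `x` tested at `x + 2m` against the minimum bounds `⟪ḡ, m⟫`,
and `‖x̃ - x⋆‖² ≤ 2‖x - x⋆‖² + 2‖m‖²` converts the `‖x - x⋆‖²` term back.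
-/

section QuadraticBounds

variable {E : Type*} [NormedAddCommGroup E] [InnerProductSpace ℝ E]

def HasQuadraticUpperBound (φ : E → ℝ) (u g : E) (L : ℝ) : Prop :=
  ∀ v, φ v ≤ φ u + inner ℝ g (v - u) + L / 2 * ‖v - u‖ ^ 2

def HasQuadraticLowerBound (φ : E → ℝ) (u g : E) (μ : ℝ) : Prop :=
  ∀ v, φ u + inner ℝ g (v - u) + μ / 2 * ‖v - u‖ ^ 2 ≤ φ v

theorem HasQuadraticLowerBound.eq_of_hasQuadraticUpperBound {φ : E → ℝ} {u a b : E} {μ L : ℝ}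
    (hlow : HasQuadraticLowerBound φ u a μ) (hup : HasQuadraticUpperBound φ u b L) : a = b := by
  set w := a - b
  have key : ∀ t > 0, ‖w‖ ^ 2 ≤ (L - μ) / 2 * t * ‖w‖ ^ 2 := by
    intro t ht
    have h := (hlow (u + t • w)).trans (hup (u + t • w))
    have hinner : inner ℝ a w - inner ℝ b w = ‖w‖ ^ 2 := by
      rw [← inner_sub_left, real_inner_self_eq_norm_sq]
    simp only [add_sub_cancel_left, real_inner_smul_right, norm_smul, Real.norm_eq_abs,
      abs_of_pos ht, mul_pow] at h
    nlinarith
  have hlim : Tendsto (fun t : ℝ => (L - μ) / 2 * t * ‖w‖ ^ 2) (𝓝[>] 0) (𝓝 0) := by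
    apply tendsto_nhdsWithin_of_tendsto_nhds
    have hcont : Continuous fun t : ℝ => (L - μ) / 2 * t * ‖w‖ ^ 2 := by fun_prop
    simpa using hcont.tendsto 0
  have hw : ‖w‖ ^ 2 ≤ 0 := ge_of_tendsto hlim (eventually_nhdsWithin_of_forall key)
  rw [← sub_eq_zero, ← norm_eq_zero, ← sq_eq_zero_iff]
  exact le_antisymm hw (sq_nonneg _)

theorem HasQuadraticUpperBound.neg_inner_sub_le_sub_of_forall_le {φ : E → ℝ} {u g z : E} {L : ℝ}
    (hup : HasQuadraticUpperBound φ u g L) (hmin : ∀ y, φ z ≤ φ y) (v : E) :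
    -inner ℝ g v - L / 2 * ‖v‖ ^ 2 ≤ φ u - φ z := by
  have h := (hmin (u + v)).trans (hup (u + v))
  rw [add_sub_cancel_left] at h
  linarith

variable {ι : Type*} [Fintype ι] [Nonempty ι]

theorem HasQuadraticUpperBound.average {f : ι → E → ℝ} {u : E} {g : ι → E} {L : ℝ}
    (h : ∀ i, HasQuadraticUpperBound (f i) u (g i) L) :
    HasQuadraticUpperBound (fun v => 1 / (Fintype.card ι : ℝ) * ∑ i, f i v) u
      ((1 / (Fintype.card ι : ℝ)) • ∑ i, g i) L := by
  intro v
  have hcard : (Fintype.card ι : ℝ) ≠ 0 := Nat.cast_ne_zero.mpr Fintype.card_ne_zero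
  have hsum := Finset.sum_le_sum fun i (_ : i ∈ univ) => h i v
  simp only [sum_add_distrib, sum_const, card_univ, nsmul_eq_mul] at hsum
  rw [real_inner_smul_left, sum_inner]
  calc 1 / (Fintype.card ι : ℝ) * ∑ i, f i v
      ≤ 1 / (Fintype.card ι : ℝ) * (∑ i, f i u + ∑ i, inner ℝ (g i) (v - u)
          + Fintype.card ι * (L / 2 * ‖v - u‖ ^ 2)) := by gcongr
    _ = _ := by field_simp

theorem average_norm_sub_smul_sq (y : E) (g : ι → E) (η : ℝ) :
    1 / (Fintype.card ι : ℝ) * ∑ i, ‖y - η • g i‖ ^ 2 =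
      ‖y‖ ^ 2 - 2 * η * inner ℝ ((1 / (Fintype.card ι : ℝ)) • ∑ i, g i) y
        + η ^ 2 * (1 / (Fintype.card ι : ℝ) * ∑ i, ‖g i‖ ^ 2) := by
  have hcard : (Fintype.card ι : ℝ) ≠ 0 := Nat.cast_ne_zero.mpr Fintype.card_ne_zero
  simp only [norm_sub_sq_real, real_inner_smul_right, norm_smul, Real.norm_eq_abs, mul_pow,
    sq_abs, sum_add_distrib, sum_sub_distrib, sum_const, card_univ, nsmul_eq_mul,
    inner_sum, ← mul_sum, real_inner_comm y]
  field_simp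

end QuadraticBounds

theorem norm_add_sq_le_two_mul {E : Type*} [SeminormedAddCommGroup E] (a b : E) :
    ‖a + b‖ ^ 2 ≤ 2 * (‖a‖ ^ 2 + ‖b‖ ^ 2) :=
  (pow_le_pow_left₀ (norm_nonneg _) (norm_add_le a b) 2).trans add_sq_le

theorem perturbed_iterate_step_general (d n : ℕ) (hn : 1 ≤ n)
    (L μ G : ℝ) (hμ : 0 < μ)
    (f : Fin n → EuclideanSpace ℝ (Fin d) → ℝ)
    (hsmooth : ∀ (i : Fin n) (u v : EuclideanSpace ℝ (Fin d)),
      f i v ≤ f i u + (inner ℝ (gradient (f i) u) (v - u) : ℝ) + L / 2 * ‖v - u‖ ^ 2)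
    (F : EuclideanSpace ℝ (Fin d) → ℝ)
    (hF : F = fun z => (1 / (n : ℝ)) * ∑ i : Fin n, f i z)
    (hstrong : ∀ u v : EuclideanSpace ℝ (Fin d),
      F u + (inner ℝ (gradient F u) (v - u) : ℝ) + μ / 2 * ‖v - u‖ ^ 2 ≤ F v)
    (xstar : EuclideanSpace ℝ (Fin d)) (hmin : ∀ y, F xstar ≤ F y)
    (x xt m : EuclideanSpace ℝ (Fin d)) (hm : m = xt - x)
    (η : ℝ) (hη : 0 < η)
    (hG : (1 / (n : ℝ)) * ∑ i : Fin n, ‖gradient (f i) x‖ ^ 2 ≤ G ^ 2) :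
    (1 / (n : ℝ)) * ∑ i : Fin n, ‖xt - η • gradient (f i) x - xstar‖ ^ 2 ≤
      (1 - η * μ / 2) * ‖xt - xstar‖ ^ 2 + η ^ 2 * G ^ 2 - η * (F x - F xstar)
        + η * (μ + 2 * L) * ‖m‖ ^ 2 := by
  have : Nonempty (Fin n) := ⟨⟨0, hn⟩⟩
  have hexp := average_norm_sub_smul_sq (xt - xstar) (fun i => gradient (f i) x) η
  rw [Fintype.card_fin] at hexp
  simp only [sub_right_comm xt _ xstar, hexp]
  set gbar := (1 / (n : ℝ)) • ∑ i, gradient (f i) x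
  have hup : HasQuadraticUpperBound F x gbar L := by
    rw [hF]
    simpa only [Fintype.card_fin] using HasQuadraticUpperBound.average fun i => hsmooth i x
  have hgrad : gradient F x = gbar :=
    HasQuadraticLowerBound.eq_of_hasQuadraticUpperBound (hstrong x) hup
  have hstar := hstrong x xstar
  rw [hgrad, ← neg_sub x xstar, inner_neg_right, norm_neg] at hstar
  have hshift := hup.neg_inner_sub_le_sub_of_forall_le hmin ((2 : ℝ) • m)
  rw [real_inner_smul_right, norm_smul, mul_pow, Real.norm_two] at hshift
  have hsplit : xt - xstar = (x - xstar) + m := by rw [hm]; abel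
  have hnorm := norm_add_sq_le_two_mul (x - xstar) m
  rw [← hsplit] at hnorm
  rw [hsplit, inner_add_right, ← hsplit]
  linarith [mul_le_mul_of_nonneg_left hG (sq_nonneg η),
    mul_le_mul_of_nonneg_left hstar (by positivity : (0 : ℝ) ≤ 2 * η),
    mul_le_mul_of_nonneg_left hshift hη.le,
    mul_le_mul_of_nonneg_left hnorm (by positivity : (0 : ℝ) ≤ η * μ / 2)]

/-- Lemma 1 (one-step perturbed-iterate inequality), stated deterministically with the
expectation over a uniform index written as an average. Each `f i` is `L`-smooth, the
average `F` is `μ`-strongly convex with minimizer `xstar`, `m = x̃ - x`, and the averaged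
stochastic gradients at `x` have squared norm at most `G²`. -/
theorem perturbed_iterate_step (d n : ℕ) (hd : 1 ≤ d) (hn : 1 ≤ n)
    (L μ G : ℝ) (hμ : 0 < μ)
    (f : Fin n → EuclideanSpace ℝ (Fin d) → ℝ)
    (hsmooth : ∀ (i : Fin n) (u v : EuclideanSpace ℝ (Fin d)),
      f i v ≤ f i u + (inner ℝ (gradient (f i) u) (v - u) : ℝ) + L / 2 * ‖v - u‖ ^ 2)
    (F : EuclideanSpace ℝ (Fin d) → ℝ)
    (hF : F = fun z => (1 / (n : ℝ)) * ∑ i : Fin n, f i z)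
    (hstrong : ∀ u v : EuclideanSpace ℝ (Fin d),
      F u + (inner ℝ (gradient F u) (v - u) : ℝ) + μ / 2 * ‖v - u‖ ^ 2 ≤ F v)
    (xstar : EuclideanSpace ℝ (Fin d)) (hmin : ∀ y, F xstar ≤ F y)
    (x xt m : EuclideanSpace ℝ (Fin d)) (hm : m = xt - x)
    (η : ℝ) (hη : 0 < η)
    (hG : (1 / (n : ℝ)) * ∑ i : Fin n, ‖gradient (f i) x‖ ^ 2 ≤ G ^ 2) :
    (1 / (n : ℝ)) * ∑ i : Fin n, ‖xt - η • gradient (f i) x - xstar‖ ^ 2 ≤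
      (1 - η * μ / 2) * ‖xt - xstar‖ ^ 2 + η ^ 2 * G ^ 2 - η * (F x - F xstar)
        + η * (μ + 2 * L) * ‖m‖ ^ 2 :=
  perturbed_iterate_step_general d n hn L μ G hμ f hsmooth F hF hstrong xstar hmin x xt m hm η hη hG
end

section
/- Let $d \ge 1$, $0 < k \le d$, and let $\mathrm{comp}\colon \mathbb{R}^d \to \mathbb{R}^d$ be a deterministic $k$-contraction, i.e. $\|x - \mathrm{comp}(x)\|^2 \le (1-k/d)\|x\|^2$ for all $x$. Let $\mu > 0$, $\alpha > 4$, $\rho = \frac{4\alpha}{(\alpha-4)(\alpha+1)^2}$, and let $a$ satisfy $a \ge \frac{(\alpha+1)\frac{d}{k} + \rho + 1}{\rho+1}$ and $a > 1$. Let $\eta_t = \frac{8}{\mu(a+t)}$, let $\gamma_0, \gamma_1, \dots$ be vectors in $\mathbb{R}^d$ with $\|\gamma_t\| \le G$ for all $t$, and define $m_0 = 0$ and $m_{t+1} = m_t + \eta_t \gamma_t - \mathrm{comp}(m_t + \eta_t \gamma_t)$. Then for every $t \ge 0$, $\|m_t\|^2 \le \eta_t^2\,\frac{4\alpha}{\alpha-4}\,\frac{d^2}{k^2}\,G^2$.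 -/
/-!
Put `δ = k/d`, `r = √(1 - δ)` and `q = √(α/(α - 4))`. The contraction gives
`‖m (t+1)‖ ≤ r (‖m t‖ + |η t| G)`, so `‖m t‖ ≤ (8G/|μ|) h t` with
`h t = ∑_{j<t} r^(t-j)/(a+j)`, and it suffices to show `h t ≤ 2q/(δ (a+t))`, which squares
to the claim. This goes by induction on `t`. Once `2q ≤ δ (q - 1 + δ/2) (a+t+1)`, the bound
propagates through `h (t+1) = r (h t + 1/(a+t))` because `r ≤ 1 - δ/2`. In the earlier steps,
which the condition on `a` allows only when `q ≥ 2`, Cauchy–Schwarz gives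
`(h t)² ≤ (1 - δ)/(δ (a-1))`, and `δ (a-1) ≥ (α+1)/(ρ+1)` makes this small enough.
-/

open Finset

theorem sum_range_succ_pow_sub_mul {R : Type*} [CommSemiring R] (x : R) (f : ℕ → R) (t : ℕ) :
    ∑ j ∈ range (t + 1), x ^ (t + 1 - j) * f j = x * (∑ j ∈ range t, x ^ (t - j) * f j + f t) := by
  rw [sum_range_succ, Nat.add_sub_cancel_left, pow_one, mul_add, mul_sum]
  congr 1
  refine sum_congr rfl fun j hj => ?_
  rw [Nat.sub_add_comm (mem_range.mp hj).le, pow_succ]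
  ring

theorem le_sum_pow_sub_mul_of_le_mul_add {R : Type*} [CommSemiring R] [PartialOrder R]
    [IsOrderedRing R] {u b : ℕ → R} {r : R} (hr : 0 ≤ r) (h0 : u 0 ≤ 0)
    (hu : ∀ t, u (t + 1) ≤ r * (u t + b t)) (t : ℕ) :
    u t ≤ ∑ j ∈ range t, r ^ (t - j) * b j := by
  induction t with
  | zero => simpa using h0
  | succ t ih =>
    rw [sum_range_succ_pow_sub_mul]
    exact (hu t).trans (mul_le_mul_of_nonneg_left (add_le_add_left ih _) hr)

theorem sum_range_pow_sub_le {x : ℝ} (hx0 : 0 ≤ x) (hx1 : x < 1) (t : ℕ) :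
    ∑ j ∈ range t, x ^ (t - j) ≤ x / (1 - x) := by
  have h1x : 0 < 1 - x := by linarith
  induction t with
  | zero => rw [range_zero, sum_empty]; positivity
  | succ t ih =>
    have := sum_range_succ_pow_sub_mul x (fun _ => 1) t
    simp only [mul_one] at this
    rw [this]
    calc x * (∑ j ∈ range t, x ^ (t - j) + 1) ≤ x * (x / (1 - x) + 1) := by gcongr
      _ = x / (1 - x) := by field_simp; ring

theorem sum_range_inv_add_sq_le {a : ℝ} (ha : 1 < a) (t : ℕ) :
    ∑ j ∈ range t, ((a + j) ^ 2)⁻¹ ≤ (a - 1)⁻¹ := by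
  have hpos : ∀ j : ℕ, 0 < a - 1 + j := fun j => by positivity
  calc ∑ j ∈ range t, ((a + j) ^ 2)⁻¹
      ≤ ∑ j ∈ range t, ((a - 1 + j)⁻¹ - (a - 1 + (j + 1 : ℕ))⁻¹) := by
        refine sum_le_sum fun j _ => ?_
        have := hpos j
        rw [Nat.cast_succ, show a - 1 + (j + 1) = a + j by ring,
          inv_sub_inv (by linarith) (by linarith), show a + j - (a - 1 + j) = 1 by ring, one_div,
          inv_le_inv₀ (by positivity) (by positivity)]
        nlinarith
    _ = (a - 1)⁻¹ - (a - 1 + t)⁻¹ := by rw [sum_range_sub' (fun j : ℕ => (a - 1 + j)⁻¹)]; simp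
    _ ≤ (a - 1)⁻¹ := sub_le_self _ (inv_nonneg.mpr (hpos t).le)

noncomputable def discountedHarmonic (r a : ℝ) (t : ℕ) : ℝ :=
  ∑ j ∈ range t, r ^ (t - j) * (a + j)⁻¹

theorem discountedHarmonic_zero (r a : ℝ) : discountedHarmonic r a 0 = 0 := by
  simp [discountedHarmonic]

theorem discountedHarmonic_succ (r a : ℝ) (t : ℕ) :
    discountedHarmonic r a (t + 1) = r * (discountedHarmonic r a t + (a + t)⁻¹) :=
  sum_range_succ_pow_sub_mul r _ t

theorem discountedHarmonic_nonneg {r a : ℝ} (hr : 0 ≤ r) (ha : 0 ≤ a) (t : ℕ) :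
    0 ≤ discountedHarmonic r a t :=
  sum_nonneg fun _ _ => by positivity

theorem sq_discountedHarmonic_le {r a : ℝ} (hr0 : 0 ≤ r) (hr1 : r < 1) (ha : 1 < a) (t : ℕ) :
    discountedHarmonic r a t ^ 2 ≤ r ^ 2 / (1 - r ^ 2) * (a - 1)⁻¹ := by
  calc discountedHarmonic r a t ^ 2
      ≤ (∑ j ∈ range t, (r ^ (t - j)) ^ 2) * ∑ j ∈ range t, ((a + j)⁻¹) ^ 2 :=
        sum_mul_sq_le_sq_mul_sq _ _ _
    _ = (∑ j ∈ range t, (r ^ 2) ^ (t - j)) * ∑ j ∈ range t, ((a + j) ^ 2)⁻¹ := by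
        simp only [← pow_mul, mul_comm 2, inv_pow]
    _ ≤ r ^ 2 / (1 - r ^ 2) * (a - 1)⁻¹ := by
        have hr2 : r ^ 2 < 1 := by nlinarith
        exact mul_le_mul (sum_range_pow_sub_le (sq_nonneg r) hr2 t) (sum_range_inv_add_sq_le ha t)
          (sum_nonneg fun j _ => by positivity) (div_nonneg (sq_nonneg r) (by linarith))

noncomputable def memoryThreshold (q : ℝ) : ℝ :=
  (5 * q ^ 2 - 1) ^ 3 / ((q ^ 2 - 1) * ((5 * q ^ 2 - 1) ^ 2 + 4 * q ^ 2 * (q ^ 2 - 1) ^ 2))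

theorem memoryThreshold_pos {q : ℝ} (hq : 1 < q) : 0 < memoryThreshold q := by
  have : 1 < q ^ 2 := by nlinarith
  unfold memoryThreshold
  have : 0 < 5 * q ^ 2 - 1 := by linarith
  positivity

theorem one_lt_of_memoryThreshold_le {δ q a : ℝ} (hδ : 0 < δ) (hq : 1 < q)
    (ha : memoryThreshold q ≤ δ * (a - 1)) : 1 < a := by
  have := pos_of_mul_pos_right ((memoryThreshold_pos hq).trans_le ha) hδ.le
  linarith

theorem two_mul_le_sub_one_mul_memoryThreshold {q : ℝ} (hq1 : 1 < q) (hq2 : q ≤ 2) :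
    2 * q ≤ (q - 1) * memoryThreshold q := by
  have hq : 0 < q ^ 2 - 1 := by nlinarith
  unfold memoryThreshold
  rw [mul_div_assoc', le_div_iff₀ (by positivity)]
  have hp : 0 ≤ q - 1 := by linarith
  have hp1 : q - 1 ≤ 1 := by linarith
  nlinarith [pow_nonneg hp 3, pow_nonneg hp 4, pow_nonneg hp 5, pow_nonneg hp 6, pow_nonneg hp 7,
    mul_nonneg hp (sub_nonneg.mpr hp1)]

theorem inv_memoryThreshold_le {q : ℝ} (hq : 1 < q) :
    (memoryThreshold q)⁻¹ ≤ (25 + 4 * q ^ 2) / 125 := by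
  have hq2 : 0 < q ^ 2 - 1 := by nlinarith
  have hN : 0 < 5 * q ^ 2 - 1 := by linarith
  set x := (q ^ 2 - 1) / (5 * q ^ 2 - 1) with hx
  have hx0 : 0 ≤ x := by positivity
  have hx5 : x ≤ 1 / 5 := by rw [div_le_iff₀ hN]; linarith
  have hκ : (memoryThreshold q)⁻¹ = x + 4 * q ^ 2 * x ^ 3 := by
    rw [memoryThreshold, inv_div, hx]
    field_simp
  rw [hκ]
  have : x ^ 3 ≤ (1 / 5) ^ 3 := pow_le_pow_left₀ hx0 hx5 3
  nlinarith [sq_nonneg q]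

theorem add_one_div_add_one_eq_memoryThreshold {α ρ : ℝ} (hα : 4 < α)
    (hρ : ρ = 4 * α / ((α - 4) * (α + 1) ^ 2)) :
    (α + 1) / (ρ + 1) = memoryThreshold √(α / (α - 4)) := by
  have hα4 : 0 < α - 4 := by linarith
  have h1 : α / (α - 4) - 1 = 4 / (α - 4) := by field_simp; ring
  have h5 : 5 * (α / (α - 4)) - 1 = 4 * (α + 1) / (α - 4) := by field_simp; ring
  rw [memoryThreshold, Real.sq_sqrt (by positivity), h1, h5, hρ]
  field_simp
  ring

theorem one_lt_sqrt_div_sub_four {α : ℝ} (hα : 4 < α) : 1 < √(α / (α - 4)) :=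
  (Real.lt_sqrt zero_le_one).mpr (by rw [one_pow, one_lt_div] <;> linarith)

theorem memoryThreshold_le_mul_sub_one {α ρ δ a : ℝ} (hα : 4 < α)
    (hρ : ρ = 4 * α / ((α - 4) * (α + 1) ^ 2)) (hδ : 0 < δ)
    (ha : ((α + 1) * δ⁻¹ + ρ + 1) / (ρ + 1) ≤ a) :
    memoryThreshold √(α / (α - 4)) ≤ δ * (a - 1) := by
  have hρ1 : 0 < ρ + 1 := by
    have : 0 < α - 4 := by linarith
    rw [hρ]; positivity
  rw [← add_one_div_add_one_eq_memoryThreshold hα hρ, div_le_iff₀ hρ1]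
  rw [div_le_iff₀ hρ1] at ha
  nlinarith [mul_le_mul_of_nonneg_left ha hδ.le, mul_inv_cancel₀ hδ.ne']

theorem sqrt_one_sub_le_one_sub_half {δ : ℝ} (hδ : δ ≤ 1) : √(1 - δ) ≤ 1 - δ / 2 :=
  Real.sqrt_le_iff.mpr ⟨by linarith, by nlinarith [sq_nonneg δ]⟩

theorem mul_add_inv_le_of_two_mul_le {δ q r s x : ℝ} (hδ : 0 < δ) (hq : 0 ≤ q) (hr0 : 0 ≤ r)
    (hr : r ≤ 1 - δ / 2) (hs : 0 < s) (hlate : 2 * q ≤ δ * (q - 1 + δ / 2) * (s + 1))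
    (hx : x ≤ 2 * q / (δ * s)) :
    r * (x + s⁻¹) ≤ 2 * q / (δ * (s + 1)) := by
  have hxs : x + s⁻¹ ≤ (2 * q + δ) / (δ * s) := by
    rw [add_div, mul_comm δ s, div_mul_cancel_right₀ hδ.ne', mul_comm s δ]
    exact add_le_add_left hx _
  calc r * (x + s⁻¹) ≤ r * ((2 * q + δ) / (δ * s)) := mul_le_mul_of_nonneg_left hxs hr0
    _ ≤ (1 - δ / 2) * ((2 * q + δ) / (δ * s)) := mul_le_mul_of_nonneg_right hr (by positivity)
    _ ≤ 2 * q / (δ * (s + 1)) := by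
        rw [mul_div_assoc', div_le_div_iff₀ (by positivity) (by positivity)]
        nlinarith [mul_le_mul_of_nonneg_left hlate hδ.le]

theorem sq_mul_le_sq_sub_mul {δ q : ℝ} (hδ0 : 0 ≤ δ) (hδ1 : δ ≤ 1) (hq : 2 ≤ q) :
    q ^ 2 * ((1 - δ) * ((25 + 4 * q ^ 2) / 125)) ≤ ((q - δ) * (q - 1 + δ / 2)) ^ 2 := by
  have hlow : (q - 1) * (q - 1 / 2) ≤ (q - δ) * (q - 1 + δ / 2) := by
    nlinarith [mul_nonneg (sub_nonneg.mpr hδ1) (by linarith : 0 ≤ q - 1 + δ)]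
  calc q ^ 2 * ((1 - δ) * ((25 + 4 * q ^ 2) / 125)) ≤ q ^ 2 * ((25 + 4 * q ^ 2) / 125) := by
        gcongr
        exact mul_le_of_le_one_left (by positivity) (by linarith)
    _ ≤ ((q - 1) * (q - 1 / 2)) ^ 2 := by
        nlinarith [mul_le_mul (by nlinarith : q ^ 2 ≤ 4 * (q - 1) ^ 2)
          (by nlinarith : 4 * (25 + 4 * q ^ 2) ≤ 125 * (q - 1 / 2) ^ 2) (by positivity)
          (by positivity)]
    _ ≤ ((q - δ) * (q - 1 + δ / 2)) ^ 2 := by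
        gcongr
        nlinarith

theorem add_inv_le_of_lt_two_mul {δ q s x : ℝ} (hδ0 : 0 < δ) (hδ1 : δ ≤ 1) (hq : 2 ≤ q)
    (hs : 1 ≤ s) (hearly : δ * (q - 1 + δ / 2) * (s + 1) < 2 * q) (hx0 : 0 ≤ x)
    (hx : x ^ 2 ≤ (1 - δ) * ((25 + 4 * q ^ 2) / 125)) :
    x + s⁻¹ ≤ 2 * q / (δ * (s + 1)) := by
  have hc : 0 < q - 1 + δ / 2 := by linarith
  have hqx : q * x ≤ (q - δ) * (q - 1 + δ / 2) := by
    refine (pow_le_pow_iff_left₀ (by positivity) (mul_nonneg (by linarith) hc.le)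
      two_ne_zero).mp ?_
    calc (q * x) ^ 2 ≤ q ^ 2 * ((1 - δ) * ((25 + 4 * q ^ 2) / 125)) := by
          rw [mul_pow]; gcongr
      _ ≤ ((q - δ) * (q - 1 + δ / 2)) ^ 2 := sq_mul_le_sq_sub_mul hδ0.le hδ1 hq
  have hxs : x * (δ * (s + 1)) ≤ 2 * (q - δ) := by
    refine le_of_mul_le_mul_right ?_ hc
    nlinarith [mul_le_mul_of_nonneg_left hearly.le hx0]
  have hs2 : s⁻¹ * (δ * (s + 1)) ≤ 2 * δ := by
    rw [inv_mul_le_iff₀ (by positivity)]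
    nlinarith
  rw [le_div_iff₀ (by positivity), add_mul]
  linarith

theorem discountedHarmonic_le {δ q a : ℝ} (hδ0 : 0 < δ) (hδ1 : δ ≤ 1) (hq : 1 < q)
    (ha : memoryThreshold q ≤ δ * (a - 1)) (t : ℕ) :
    discountedHarmonic √(1 - δ) a t ≤ 2 * q / (δ * (a + t)) := by
  have hκ := memoryThreshold_pos hq
  have ha1 := one_lt_of_memoryThreshold_le hδ0 hq ha
  have hr0 := Real.sqrt_nonneg (1 - δ)
  have hr1 : √(1 - δ) ≤ 1 := (sqrt_one_sub_le_one_sub_half hδ1).trans (by linarith)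
  have hr2 : √(1 - δ) ^ 2 = 1 - δ := Real.sq_sqrt (by linarith)
  induction t with
  | zero => rw [discountedHarmonic_zero]; positivity
  | succ t ih =>
    rw [discountedHarmonic_succ, Nat.cast_succ, ← add_assoc]
    have hs : 1 ≤ a + t := by have := t.cast_nonneg (α := ℝ); linarith
    by_cases hlate : 2 * q ≤ δ * (q - 1 + δ / 2) * (a + t + 1)
    · exact mul_add_inv_le_of_two_mul_le hδ0 (by linarith) hr0
        (sqrt_one_sub_le_one_sub_half hδ1) (by linarith) hlate ih
    -- the hypothesis on `a` rules out this early regime unless `2 ≤ q`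
    have hq2 : 2 ≤ q := by
      by_contra! hq2
      refine hlate ((two_mul_le_sub_one_mul_memoryThreshold hq hq2.le).trans ?_)
      calc (q - 1) * memoryThreshold q ≤ (q - 1) * (δ * (a - 1)) :=
            mul_le_mul_of_nonneg_left ha (by linarith)
        _ ≤ δ * (q - 1 + δ / 2) * (a + t + 1) := by
            nlinarith [mul_le_mul_of_nonneg_left (mul_le_mul (by linarith : q - 1 ≤ q - 1 + δ / 2)
              (by linarith : a - 1 ≤ a + t + 1) (by linarith) (by linarith)) hδ0.le]
    have hx : discountedHarmonic √(1 - δ) a t ^ 2 ≤ (1 - δ) * ((25 + 4 * q ^ 2) / 125) :=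
      calc discountedHarmonic √(1 - δ) a t ^ 2 ≤ (1 - δ) / δ * (a - 1)⁻¹ := by
            simpa only [hr2, sub_sub_cancel] using
              sq_discountedHarmonic_le hr0 (by nlinarith) ha1 t
        _ = (1 - δ) * (δ * (a - 1))⁻¹ := by rw [mul_inv, div_eq_mul_inv, mul_assoc]
        _ ≤ (1 - δ) * (memoryThreshold q)⁻¹ :=
            mul_le_mul_of_nonneg_left (inv_anti₀ hκ ha) (by linarith)
        _ ≤ (1 - δ) * ((25 + 4 * q ^ 2) / 125) :=
            mul_le_mul_of_nonneg_left (inv_memoryThreshold_le hq) (by linarith)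
    have hh : 0 ≤ discountedHarmonic √(1 - δ) a t := discountedHarmonic_nonneg hr0 (by linarith) t
    calc √(1 - δ) * (discountedHarmonic √(1 - δ) a t + (a + t)⁻¹)
        ≤ discountedHarmonic √(1 - δ) a t + (a + t)⁻¹ :=
          mul_le_of_le_one_left (add_nonneg hh (by positivity)) hr1
      _ ≤ 2 * q / (δ * (a + t + 1)) :=
          add_inv_le_of_lt_two_mul hδ0 hδ1 hq2 hs (not_le.mp hlate) hh hx

theorem norm_sub_le_sqrt_mul_norm {E : Type*} [SeminormedAddCommGroup E] {comp : E → E} {δ : ℝ}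
    (hcomp : ∀ z, ‖z - comp z‖ ^ 2 ≤ (1 - δ) * ‖z‖ ^ 2) (z : E) :
    ‖z - comp z‖ ≤ √(1 - δ) * ‖z‖ := by
  rw [← Real.sqrt_sq (norm_nonneg (z - comp z)), ← Real.sqrt_sq (norm_nonneg z),
    ← Real.sqrt_mul' _ (sq_nonneg _)]
  exact Real.sqrt_le_sqrt (hcomp z)

theorem norm_le_sum_sqrt_pow_mul {E : Type*} [SeminormedAddCommGroup E] [NormedSpace ℝ E]
    {comp : E → E} {δ G : ℝ} (hcomp : ∀ z, ‖z - comp z‖ ^ 2 ≤ (1 - δ) * ‖z‖ ^ 2)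
    {η : ℕ → ℝ} {γ m : ℕ → E} (hγ : ∀ t, ‖γ t‖ ≤ G) (hm0 : m 0 = 0)
    (hmrec : ∀ t, m (t + 1) = m t + η t • γ t - comp (m t + η t • γ t)) (t : ℕ) :
    ‖m t‖ ≤ ∑ j ∈ range t, √(1 - δ) ^ (t - j) * (|η j| * G) := by
  refine le_sum_pow_sub_mul_of_le_mul_add (u := fun t => ‖m t‖) (Real.sqrt_nonneg _)
    (by rw [hm0, norm_zero]) (fun t => ?_) t
  rw [hmrec]
  refine (norm_sub_le_sqrt_mul_norm hcomp _).trans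
    (mul_le_mul_of_nonneg_left ?_ (Real.sqrt_nonneg _))
  calc ‖m t + η t • γ t‖ ≤ ‖m t‖ + |η t| * ‖γ t‖ := by
        rw [← Real.norm_eq_abs, ← norm_smul]; exact norm_add_le _ _
    _ ≤ ‖m t‖ + |η t| * G := by gcongr; exact hγ t

theorem sum_pow_sub_mul_abs_mul_eq {r a c μ G : ℝ} {η : ℕ → ℝ} (ha : 0 ≤ a) (hc : 0 ≤ c)
    (hη : ∀ t : ℕ, η t = c / (μ * (a + t))) (t : ℕ) :
    ∑ j ∈ range t, r ^ (t - j) * (|η j| * G) = c * G / |μ| * discountedHarmonic r a t := by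
  rw [discountedHarmonic, mul_sum]
  refine sum_congr rfl fun j _ => ?_
  rw [hη, abs_div, abs_mul, abs_of_nonneg (by positivity : 0 ≤ a + j), abs_of_nonneg hc]
  simp only [div_eq_mul_inv, mul_inv]
  ring

theorem memory_bound_general (d : ℕ) (k : ℝ) (hk : 0 < k) (hkd : k ≤ (d : ℝ))
    (comp : EuclideanSpace ℝ (Fin d) → EuclideanSpace ℝ (Fin d))
    (hcomp : ∀ z : EuclideanSpace ℝ (Fin d), ‖z - comp z‖ ^ 2 ≤ (1 - k / d) * ‖z‖ ^ 2)
    (μ α ρ a G : ℝ) (hα : 4 < α)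
    (hρ : ρ = 4 * α / ((α - 4) * (α + 1) ^ 2))
    (ha : ((α + 1) * ((d : ℝ) / k) + ρ + 1) / (ρ + 1) ≤ a)
    (η : ℕ → ℝ) (hη : ∀ t : ℕ, η t = 8 / (μ * (a + t)))
    (γ : ℕ → EuclideanSpace ℝ (Fin d)) (hγ : ∀ t : ℕ, ‖γ t‖ ≤ G)
    (m : ℕ → EuclideanSpace ℝ (Fin d)) (hm0 : m 0 = 0)
    (hmrec : ∀ t : ℕ, m (t + 1) = m t + η t • γ t - comp (m t + η t • γ t)) :
    ∀ t : ℕ, ‖m t‖ ^ 2 ≤ (η t) ^ 2 * (4 * α / (α - 4)) * ((d : ℝ) / k) ^ 2 * G ^ 2 := by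
  intro t
  have hd : 0 < (d : ℝ) := hk.trans_le hkd
  set δ := k / d
  have hδ0 : 0 < δ := div_pos hk hd
  have hδ1 : δ ≤ 1 := div_le_one_of_le₀ hkd hd.le
  have hdk : (d : ℝ) / k = δ⁻¹ := (inv_div k d).symm
  have hκ := memoryThreshold_le_mul_sub_one hα hρ hδ0 (hdk ▸ ha)
  set q := √(α / (α - 4))
  have hq : 1 < q := one_lt_sqrt_div_sub_four hα
  have ha1 := one_lt_of_memoryThreshold_le hδ0 hq hκ
  have hG : 0 ≤ G := (norm_nonneg _).trans (hγ 0)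
  have hm : ‖m t‖ ≤ 8 * G / |μ| * (2 * q / (δ * (a + t))) :=
    calc ‖m t‖ ≤ ∑ j ∈ range t, √(1 - δ) ^ (t - j) * (|η j| * G) :=
          norm_le_sum_sqrt_pow_mul hcomp hγ hm0 hmrec t
      _ = 8 * G / |μ| * discountedHarmonic √(1 - δ) a t :=
          sum_pow_sub_mul_abs_mul_eq (by linarith) (by norm_num) hη t
      _ ≤ _ := mul_le_mul_of_nonneg_left (discountedHarmonic_le hδ0 hδ1 hq hκ t) (by positivity)
  calc ‖m t‖ ^ 2 ≤ (8 * G / |μ| * (2 * q / (δ * (a + t)))) ^ 2 := by gcongr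
    _ = (η t) ^ 2 * (4 * α / (α - 4)) * ((d : ℝ) / k) ^ 2 * G ^ 2 := by
        have hq2 : q ^ 2 = α / (α - 4) := Real.sq_sqrt (div_nonneg (by linarith) (by linarith))
        rw [hη, hdk, show 4 * α / (α - 4) = 4 * q ^ 2 by rw [hq2]; ring]
        simp only [div_eq_mul_inv, mul_inv, mul_pow, inv_pow, sq_abs]
        ring

/-- Lemma 2 (memory bound), deterministic form: for a `k`-contraction `comp`, stepsizes
`η_t = 8/(μ(a+t))` with `a` large enough as stated, and update vectors `γ_t` with
`‖γ_t‖ ≤ G`, the error-accumulation vectors `m_t` satisfy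
`‖m_t‖² ≤ η_t² (4α/(α-4)) (d/k)² G²`. -/
theorem memory_bound (d : ℕ) (hd : 1 ≤ d) (k : ℝ) (hk : 0 < k) (hkd : k ≤ (d : ℝ))
    (comp : EuclideanSpace ℝ (Fin d) → EuclideanSpace ℝ (Fin d))
    (hcomp : ∀ z : EuclideanSpace ℝ (Fin d), ‖z - comp z‖ ^ 2 ≤ (1 - k / d) * ‖z‖ ^ 2)
    (μ α ρ a G : ℝ) (hμ : 0 < μ) (hα : 4 < α)
    (hρ : ρ = 4 * α / ((α - 4) * (α + 1) ^ 2))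
    (ha : ((α + 1) * ((d : ℝ) / k) + ρ + 1) / (ρ + 1) ≤ a) (ha1 : 1 < a)
    (η : ℕ → ℝ) (hη : ∀ t : ℕ, η t = 8 / (μ * (a + t)))
    (γ : ℕ → EuclideanSpace ℝ (Fin d)) (hγ : ∀ t : ℕ, ‖γ t‖ ≤ G)
    (m : ℕ → EuclideanSpace ℝ (Fin d)) (hm0 : m 0 = 0)
    (hmrec : ∀ t : ℕ, m (t + 1) = m t + η t • γ t - comp (m t + η t • γ t)) :
    ∀ t : ℕ, ‖m t‖ ^ 2 ≤ (η t) ^ 2 * (4 * α / (α - 4)) * ((d : ℝ) / k) ^ 2 * G ^ 2 :=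
  memory_bound_general d k hk hkd comp hcomp μ α ρ a G hα hρ ha η hη γ hγ m hm0 hmrec
end

section
/- Let $\mu > 0$, $a > 1$, $A, B \ge 0$, and $\eta_t = \frac{8}{\mu(a+t)}$ for $t \ge 0$. Let $\{a_t\}_{t\ge 0}$ and $\{e_t\}_{t\ge 0}$ be sequences of nonnegative reals satisfying $a_{t+1} \le \left(1 - \frac{\mu\eta_t}{2}\right)a_t + \eta_t^2 A + \eta_t^3 B - \eta_t e_t$ for all $t \ge 0$. Let $w_t = (a+t)^2$ and $S_T = \sum_{t=0}^{T-1} w_t$. Then for every $T \ge 1$: $\frac{1}{S_T}\sum_{t=0}^{T-1} w_t e_t \le \frac{\mu a^3}{8 S_T} a_0 + \frac{4T(T+2a)}{\mu S_T} A + \frac{64 T}{\mu^2 S_T} B$, where $S_T = \frac{T}{6}\left(2T^2 + 6aT - 3T + 6a^2 - 6a + 1\right) \ge \frac{1}{3}T^3$. -/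
/-!
Multiplying the recursion at step `t` by `(a + t)² / η_t = μ (a + t)³ / 8` turns the coefficient of
`a_t` into `μ/8 · ((a + t)³ - 4 (a + t)²) ≤ μ/8 · (a + t - 1)³`, so the potential
`Φ_t = μ/8 · (a + t - 1)³ a_t` telescopes: `w_t e_t ≤ Φ_t - Φ_{t+1} + 8 (a + t) A / μ + 64 B / μ²`.
Summing over `t < T`, dropping `Φ_T ≥ 0` and using `(a - 1)³ ≤ a³` gives the bound on `∑ w_t e_t`.
-/

open Finset

lemma sum_range_add_sq (a : ℝ) (T : ℕ) :
    ∑ t ∈ range T, (a + t) ^ 2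
      = (T : ℝ) / 6 * (2 * (T : ℝ) ^ 2 + 6 * a * T - 3 * T + 6 * a ^ 2 - 6 * a + 1) := by
  induction T with
  | zero => simp
  | succ n ih => rw [sum_range_succ, ih]; push_cast; ring

lemma two_mul_sum_range_add (a : ℝ) (T : ℕ) :
    2 * ∑ t ∈ range T, (a + t) = T * (2 * a + T - 1) := by
  induction T with
  | zero => simp
  | succ n ih => rw [sum_range_succ, mul_add, ih]; push_cast; ring

lemma third_mul_cube_le_sum_range_add_sq {a : ℝ} (ha : 1 ≤ a) (T : ℕ) :
    1 / 3 * (T : ℝ) ^ 3 ≤ ∑ t ∈ range T, (a + t) ^ 2 := by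
  rw [sum_range_add_sq]
  have hT : (0 : ℝ) ≤ T := T.cast_nonneg
  nlinarith [mul_nonneg (mul_nonneg hT hT) (by linarith : (0 : ℝ) ≤ 2 * a - 1),
    mul_nonneg hT (by nlinarith : (0 : ℝ) ≤ 6 * a ^ 2 - 6 * a + 1)]

lemma sum_range_le_of_le_sub_add {M : Type*} [AddCommGroup M] [PartialOrder M]
    [IsOrderedAddMonoid M] {u v Φ : ℕ → M} {T : ℕ} (hΦ : 0 ≤ Φ T)
    (h : ∀ t < T, u t ≤ Φ t - Φ (t + 1) + v t) :
    ∑ t ∈ range T, u t ≤ Φ 0 + ∑ t ∈ range T, v t :=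
  calc ∑ t ∈ range T, u t ≤ ∑ t ∈ range T, (Φ t - Φ (t + 1) + v t) :=
        sum_le_sum fun t ht => h t (mem_range.mp ht)
    _ = Φ 0 - Φ T + ∑ t ∈ range T, v t := by rw [sum_add_distrib, sum_range_sub']
    _ ≤ Φ 0 + ∑ t ∈ range T, v t := by
        gcongr
        exact sub_le_self _ hΦ

lemma sq_mul_le_of_step {μ x η A B a₀ a₁ e : ℝ} (hμ : 0 < μ) (hx : 1 ≤ x) (ha₀ : 0 ≤ a₀)
    (hη : η = 8 / (μ * x))
    (h : a₁ ≤ (1 - μ * η / 2) * a₀ + η ^ 2 * A + η ^ 3 * B - η * e) :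
    x ^ 2 * e ≤ μ / 8 * (x - 1) ^ 3 * a₀ - μ / 8 * x ^ 3 * a₁ + 8 * x / μ * A
      + 64 / μ ^ 2 * B := by
  subst hη
  have hx₀ : 0 < x := by linarith
  have scaled : μ * x ^ 3 / 8 * a₁ ≤ μ / 8 * (x ^ 3 - 4 * x ^ 2) * a₀ + 8 * x / μ * A
      + 64 / μ ^ 2 * B - x ^ 2 * e :=
    calc μ * x ^ 3 / 8 * a₁
        ≤ μ * x ^ 3 / 8 * ((1 - μ * (8 / (μ * x)) / 2) * a₀ + (8 / (μ * x)) ^ 2 * A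
          + (8 / (μ * x)) ^ 3 * B - 8 / (μ * x) * e) := by gcongr
      _ = _ := by field_simp; ring
  have hcube : μ / 8 * (x ^ 3 - 4 * x ^ 2) * a₀ ≤ μ / 8 * (x - 1) ^ 3 * a₀ := by
    gcongr
    nlinarith
  linarith

lemma sum_sq_mul_le {μ a A B : ℝ} (hμ : 0 < μ) (ha : 1 ≤ a) (hA : 0 ≤ A) {η aseq e : ℕ → ℝ}
    (hη : ∀ t : ℕ, η t = 8 / (μ * (a + t))) (haseq : ∀ t, 0 ≤ aseq t)
    (hrec : ∀ t : ℕ, aseq (t + 1) ≤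
      (1 - μ * η t / 2) * aseq t + (η t) ^ 2 * A + (η t) ^ 3 * B - η t * e t)
    (T : ℕ) :
    ∑ t ∈ range T, (a + t) ^ 2 * e t ≤
      μ * a ^ 3 / 8 * aseq 0 + 4 * T * (T + 2 * a) / μ * A + 64 * T / μ ^ 2 * B := by
  have hle : ∀ t : ℕ, 1 ≤ a + t := fun t => by linarith [t.cast_nonneg (α := ℝ)]
  have htel := sum_range_le_of_le_sub_add (T := T) (u := fun t => (a + t) ^ 2 * e t)
    (v := fun t => 8 * (a + t) / μ * A + 64 / μ ^ 2 * B)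
    (Φ := fun t => μ / 8 * (a + t - 1) ^ 3 * aseq t)
    (by have := hle T; have := haseq T; positivity)
    (fun t _ => by
      rw [Nat.cast_succ, show a + ((t : ℝ) + 1) - 1 = a + t by ring]
      linarith [sq_mul_le_of_step hμ (hle t) (haseq t) (hη t) (hrec t)])
  have hv : ∑ t ∈ range T, (8 * (a + t) / μ * A + 64 / μ ^ 2 * B)
      = 4 / μ * A * (2 * ∑ t ∈ range T, (a + t)) + 64 * T / μ ^ 2 * B := by
    rw [sum_add_distrib, sum_const, card_range, nsmul_eq_mul, mul_sum, mul_sum]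
    congr 1
    · exact sum_congr rfl fun t _ => by ring
    · ring
  rw [hv, two_mul_sum_range_add, Nat.cast_zero, add_zero] at htel
  have hΦ₀ : μ / 8 * (a - 1) ^ 3 * aseq 0 ≤ μ * a ^ 3 / 8 * aseq 0 := by
    rw [mul_div_right_comm]
    gcongr
    exacts [haseq 0, by linarith]
  have hA_sum : 4 / μ * A * (T * (2 * a + T - 1)) ≤ 4 * T * (T + 2 * a) / μ * A := by
    rw [show 4 * T * (T + 2 * a) / μ * A = 4 / μ * A * (T * (T + 2 * a)) by ring]
    gcongr
    linarith
  linarith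

theorem weighted_averaging_lemma_general (μ a A B : ℝ) (hμ : 0 < μ) (ha : 1 < a)
    (hA : 0 ≤ A)
    (η : ℕ → ℝ) (hη : ∀ t : ℕ, η t = 8 / (μ * (a + t)))
    (aseq e : ℕ → ℝ) (haseq : ∀ t, 0 ≤ aseq t)
    (hrec : ∀ t : ℕ, aseq (t + 1) ≤
      (1 - μ * η t / 2) * aseq t + (η t) ^ 2 * A + (η t) ^ 3 * B - η t * e t)
    (w : ℕ → ℝ) (hw : ∀ t : ℕ, w t = (a + t) ^ 2)
    (T : ℕ) (S : ℝ) (hS : S = ∑ t ∈ Finset.range T, w t) :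
    (1 / S) * ∑ t ∈ Finset.range T, w t * e t ≤
        μ * a ^ 3 / (8 * S) * aseq 0 + 4 * T * (T + 2 * a) / (μ * S) * A
          + 64 * T / (μ ^ 2 * S) * B
      ∧ S = (T : ℝ) / 6 * (2 * (T : ℝ) ^ 2 + 6 * a * T - 3 * T + 6 * a ^ 2 - 6 * a + 1)
      ∧ (1 / 3 : ℝ) * (T : ℝ) ^ 3 ≤ S := by
  have hS' : S = ∑ t ∈ range T, (a + t) ^ 2 := hS.trans (sum_congr rfl fun t _ => hw t)
  have hsum := sum_sq_mul_le hμ ha.le hA hη haseq hrec T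
  simp only [← hw] at hsum
  refine ⟨?_, hS'.trans (sum_range_add_sq a T), hS' ▸ third_mul_cube_le_sum_range_add_sq ha.le T⟩
  calc 1 / S * ∑ t ∈ range T, w t * e t = (∑ t ∈ range T, w t * e t) / S := one_div_mul_eq_div _ _
    _ ≤ (μ * a ^ 3 / 8 * aseq 0 + 4 * T * (T + 2 * a) / μ * A + 64 * T / μ ^ 2 * B) / S :=
        div_le_div_of_nonneg_right hsum (hS' ▸ sum_nonneg fun _ _ => sq_nonneg _)
    _ = _ := by ring

/-- Lemma 3 (weighted-averaging lemma): if nonnegative real sequences `a_t`, `e_t` satisfy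
`a_{t+1} ≤ (1 - μ η_t / 2) a_t + η_t² A + η_t³ B - η_t e_t` with `η_t = 8/(μ(a+t))`, then the
weighted averages of the `e_t` with weights `w_t = (a+t)²` satisfy the stated bound, where
`S_T = ∑_{t<T} w_t = T/6 (2T² + 6aT - 3T + 6a² - 6a + 1) ≥ T³/3`. -/
theorem weighted_averaging_lemma (μ a A B : ℝ) (hμ : 0 < μ) (ha : 1 < a)
    (hA : 0 ≤ A) (hB : 0 ≤ B)
    (η : ℕ → ℝ) (hη : ∀ t : ℕ, η t = 8 / (μ * (a + t)))
    (aseq e : ℕ → ℝ) (haseq : ∀ t, 0 ≤ aseq t) (he : ∀ t, 0 ≤ e t)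
    (hrec : ∀ t : ℕ, aseq (t + 1) ≤
      (1 - μ * η t / 2) * aseq t + (η t) ^ 2 * A + (η t) ^ 3 * B - η t * e t)
    (w : ℕ → ℝ) (hw : ∀ t : ℕ, w t = (a + t) ^ 2)
    (T : ℕ) (hT : 1 ≤ T) (S : ℝ) (hS : S = ∑ t ∈ Finset.range T, w t) :
    (1 / S) * ∑ t ∈ Finset.range T, w t * e t ≤
        μ * a ^ 3 / (8 * S) * aseq 0 + 4 * T * (T + 2 * a) / (μ * S) * A
          + 64 * T / (μ ^ 2 * S) * B
      ∧ S = (T : ℝ) / 6 * (2 * (T : ℝ) ^ 2 + 6 * a * T - 3 * T + 6 * a ^ 2 - 6 * a + 1)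
      ∧ (1 / 3 : ℝ) * (T : ℝ) ^ 3 ≤ S :=
  weighted_averaging_lemma_general μ a A B hμ ha hA η hη aseq e haseq hrec w hw T S hS
end

section
/- Let $A \ge 0$ and let $d \ge k \ge 1$ be reals. Let $\alpha > 4$, set $\rho = \frac{4\alpha}{(\alpha-4)(\alpha+1)^2}$, and let $a \ge \frac{(\alpha+1)\frac{d}{k} + \rho + 1}{\rho+1}$ with $a > 1$. Let $\eta_t = \frac{1}{a+t}$, and let $\{h_t\}_{t\ge 0}$ be a sequence of nonnegative reals with $h_0 = 0$ and, for all $t \ge 0$, $h_{t+1} \le \min\Big\{\left(1 - \frac{k}{2d}\right)h_t + \frac{2d}{k}\eta_t^2 A,\; (t+1)\sum_{i=0}^{t}\eta_i^2 A\Big\}$. Then for every $t \ge 0$: $h_t \le \frac{4\alpha}{\alpha-4}\,\eta_t^2\,\frac{d^2}{k^2}\,A$. -/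
/-!
Write `m = d / k` and `C = 4α / (α - 4)`, and prove `h_t ≤ C m² A / (a + t)²` by induction on `t`.
Once `a + t ≥ αm - 1`, the contraction `1 - 1/(2m)` beats the decay of `1/(a + t)²`, so the first
branch of the recursion propagates the bound. Before that, the second branch and the telescoping
estimate `∑_{i ≤ t} 1/(a + i)² ≤ (t + 1) / ((a - 1)(a + t))` give
`h_{t+1} ≤ (t + 1)² A / ((a - 1)(a + t))`, which is small enough because the lower bound on `a`
forces `t + 1 ≤ (a - 1) ρ` in this phase, and `ρ (α + 1)² = C`.
-/

open Finset

lemma sum_range_one_div_add_sq_le {a : ℝ} (ha : 1 < a) (t : ℕ) :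
    ∑ i ∈ range (t + 1), (1 / (a + i)) ^ 2 ≤ (t + 1) / ((a - 1) * (a + t)) := by
  have hpos : ∀ x : ℝ, 0 ≤ x → 0 < a - 1 + x := fun x hx => by linarith
  -- `1/(a+i)² ≤ 1/((a-1+i)(a+i))`, which telescopes
  have hterm : ∀ i : ℕ, (1 / (a + i)) ^ 2 ≤ 1 / (a - 1 + i) - 1 / (a - 1 + (i + 1 : ℕ)) := by
    intro i
    have hi := hpos i i.cast_nonneg
    rw [Nat.cast_succ, div_sub_div _ _ hi.ne' (by linarith), div_pow, one_pow,
      div_le_div_iff₀ (by positivity) (by positivity)]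
    nlinarith
  calc ∑ i ∈ range (t + 1), (1 / (a + i)) ^ 2
      ≤ ∑ i ∈ range (t + 1), (1 / (a - 1 + i) - 1 / (a - 1 + (i + 1 : ℕ))) := sum_le_sum fun i _ => hterm i
    _ = (t + 1) / ((a - 1) * (a + t)) := by
      rw [sum_range_sub' (fun i : ℕ => 1 / (a - 1 + i))]
      have ha1 : a - 1 ≠ 0 := by linarith
      have hat : a + t ≠ 0 := by linarith [hpos t t.cast_nonneg]
      rw [Nat.cast_zero, add_zero, Nat.cast_succ, show a - 1 + (t + 1) = a + t by ring]
      field_simp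
      ring

lemma contraction_coeff_le {α m s : ℝ} (hα : 4 < α) (hm : 1 ≤ m) (hs : α * m - 1 ≤ s) :
    (1 - 1 / (2 * m)) * (4 * α / (α - 4) * (1 / s) ^ 2 * m ^ 2) + 2 * m * (1 / s) ^ 2 ≤
      4 * α / (α - 4) * (1 / (s + 1)) ^ 2 * m ^ 2 := by
  have hm0 : 0 < m := by linarith
  have h4 : 0 < α - 4 := by linarith
  have hs0 : 0 < s := by nlinarith
  have key : (α * m - 2) * (s + 1) ^ 2 ≤ α * m * s ^ 2 := by nlinarith
  have lhs : (1 - 1 / (2 * m)) * (4 * α / (α - 4) * (1 / s) ^ 2 * m ^ 2) + 2 * m * (1 / s) ^ 2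
      = 4 * m * (α * m - 2) / (α - 4) / s ^ 2 := by
    field_simp
    ring
  have rhs : 4 * α / (α - 4) * (1 / (s + 1)) ^ 2 * m ^ 2 = 4 * α * m ^ 2 / (α - 4) / (s + 1) ^ 2 := by
    field_simp
  rw [lhs, rhs, div_le_div_iff₀ (by positivity) (by positivity), div_mul_eq_mul_div,
    div_mul_eq_mul_div, div_le_div_iff₀ h4 h4]
  nlinarith [mul_le_mul_of_nonneg_left key (by positivity : 0 ≤ 4 * m * (α - 4))]

lemma contraction_step {α m s A x : ℝ} (hα : 4 < α) (hm : 1 ≤ m) (hA : 0 ≤ A)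
    (hs : α * m - 1 ≤ s) (hx : x ≤ 4 * α / (α - 4) * (1 / s) ^ 2 * m ^ 2 * A) :
    (1 - 1 / (2 * m)) * x + 2 * m * (1 / s) ^ 2 * A ≤
      4 * α / (α - 4) * (1 / (s + 1)) ^ 2 * m ^ 2 * A := by
  have hcoef : 0 ≤ 1 - 1 / (2 * m) := by
    rw [sub_nonneg, div_le_one (by linarith)]
    linarith
  calc (1 - 1 / (2 * m)) * x + 2 * m * (1 / s) ^ 2 * A
      ≤ (1 - 1 / (2 * m)) * (4 * α / (α - 4) * (1 / s) ^ 2 * m ^ 2 * A)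
          + 2 * m * (1 / s) ^ 2 * A := by gcongr
    _ = ((1 - 1 / (2 * m)) * (4 * α / (α - 4) * (1 / s) ^ 2 * m ^ 2)
          + 2 * m * (1 / s) ^ 2) * A := by ring
    _ ≤ 4 * α / (α - 4) * (1 / (s + 1)) ^ 2 * m ^ 2 * A := by
      gcongr
      exact contraction_coeff_le hα hm hs

lemma sq_mul_sq_le_of_le_mul {ρ a u B : ℝ} (hρ : 0 ≤ ρ) (ha : 1 ≤ a) (hu0 : 0 ≤ u)
    (hu : u ≤ (a - 1) * ρ) (hB : a + u ≤ B) :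
    u ^ 2 * (a + u) ^ 2 ≤ ρ * B ^ 2 * ((a - 1) * (a + u - 1)) := by
  have hu2 : u ^ 2 ≤ (a - 1) * ρ * (a + u - 1) :=
    calc u ^ 2 = u * u := sq u
      _ ≤ (a - 1) * ρ * (a + u - 1) := mul_le_mul hu (by linarith) hu0 (by positivity)
  have hB2 : (a + u) ^ 2 ≤ B ^ 2 := pow_le_pow_left₀ (by linarith) hB 2
  calc u ^ 2 * (a + u) ^ 2 ≤ (a - 1) * ρ * (a + u - 1) * B ^ 2 :=
        mul_le_mul hu2 hB2 (sq_nonneg _) (mul_nonneg (by positivity) (by linarith))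
    _ = ρ * B ^ 2 * ((a - 1) * (a + u - 1)) := by ring

lemma cumulative_step {α ρ m a A : ℝ} (hα : 4 < α) (hm : 1 ≤ m)
    (hρ : ρ = 4 * α / ((α - 4) * (α + 1) ^ 2)) (haρ : (α + 1) * m ≤ (a - 1) * (ρ + 1))
    (hA : 0 ≤ A) (n : ℕ) (hn : a + (n + 1) < α * m) :
    ((n : ℝ) + 1) * ∑ i ∈ range (n + 1), (1 / (a + i)) ^ 2 * A ≤
      4 * α / (α - 4) * (1 / (a + (n + 1))) ^ 2 * m ^ 2 * A := by
  have h4 : 0 < α - 4 := by linarith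
  have hρ0 : 0 ≤ ρ := hρ ▸ by positivity
  have hC : 4 * α / (α - 4) = ρ * (α + 1) ^ 2 := by
    rw [hρ]
    field_simp
  have ha : 1 < a := by nlinarith
  have hu : (n : ℝ) + 1 ≤ (a - 1) * ρ := by nlinarith
  have hcoeff := sq_mul_sq_le_of_le_mul hρ0 ha.le (by positivity) hu
    (show a + (n + 1) ≤ (α + 1) * m by nlinarith)
  have hbound : ((n : ℝ) + 1) ^ 2 / ((a - 1) * (a + n)) ≤
      4 * α / (α - 4) * (1 / (a + (n + 1))) ^ 2 * m ^ 2 := by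
    rw [div_pow, one_pow, hC, div_le_iff₀ (by positivity)]
    field_simp
    linarith
  calc ((n : ℝ) + 1) * ∑ i ∈ range (n + 1), (1 / (a + i)) ^ 2 * A
      = (n + 1) * (∑ i ∈ range (n + 1), (1 / (a + i)) ^ 2) * A := by rw [mul_assoc, sum_mul]
    _ ≤ (n + 1) * ((n + 1) / ((a - 1) * (a + n))) * A := by
      gcongr
      exact sum_range_one_div_add_sq_le ha n
    _ = ((n : ℝ) + 1) ^ 2 / ((a - 1) * (a + n)) * A := by ring
    _ ≤ 4 * α / (α - 4) * (1 / (a + (n + 1))) ^ 2 * m ^ 2 * A := by gcongr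

theorem memory_recursion_bound_general (A d k : ℝ) (hA : 0 ≤ A) (hk : 1 ≤ k) (hkd : k ≤ d)
    (α ρ a : ℝ) (hα : 4 < α) (hρ : ρ = 4 * α / ((α - 4) * (α + 1) ^ 2))
    (ha : ((α + 1) * (d / k) + ρ + 1) / (ρ + 1) ≤ a)
    (η : ℕ → ℝ) (hη : ∀ t : ℕ, η t = 1 / (a + t))
    (h : ℕ → ℝ) (h0 : h 0 = 0)
    (hrec : ∀ t : ℕ, h (t + 1) ≤
      min ((1 - k / (2 * d)) * h t + 2 * d / k * (η t) ^ 2 * A)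
        (((t : ℝ) + 1) * ∑ i ∈ Finset.range (t + 1), (η i) ^ 2 * A)) :
    ∀ t : ℕ, h t ≤ 4 * α / (α - 4) * (η t) ^ 2 * (d / k) ^ 2 * A := by
  have hk0 : 0 < k := by linarith
  have hm : 1 ≤ d / k := (one_le_div hk0).mpr hkd
  have h4 : 0 < α - 4 := by linarith
  have haρ : (α + 1) * (d / k) ≤ (a - 1) * (ρ + 1) := by
    rw [div_le_iff₀ (hρ ▸ by positivity)] at ha
    linarith
  have hcontr : k / (2 * d) = 1 / (2 * (d / k)) := by field_simp
  have hnoise : 2 * d / k = 2 * (d / k) := by ring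
  simp only [hη, hcontr, hnoise] at hrec ⊢
  intro t
  induction t with
  | zero => rw [h0]; positivity
  | succ n ih =>
    rcases le_or_gt (α * (d / k) - 1) (a + n) with hs | hs
    · rw [Nat.cast_succ, ← add_assoc]
      exact ((hrec n).trans (min_le_left _ _)).trans (contraction_step hα hm hA hs ih)
    · rw [Nat.cast_succ]
      exact ((hrec n).trans (min_le_right _ _)).trans
        (cumulative_step hα hm hρ haρ hA n (by linarith))

/-- Lemma A.3: a nonnegative sequence `h_t` with `h_0 = 0` satisfying both a
geometric-decay-plus-noise recursion and a crude cumulative bound is dominated by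
`(4α/(α-4)) (d/k)² A η_t²`, where `η_t = 1/(a+t)`. -/
theorem memory_recursion_bound (A d k : ℝ) (hA : 0 ≤ A) (hk : 1 ≤ k) (hkd : k ≤ d)
    (α ρ a : ℝ) (hα : 4 < α) (hρ : ρ = 4 * α / ((α - 4) * (α + 1) ^ 2))
    (ha : ((α + 1) * (d / k) + ρ + 1) / (ρ + 1) ≤ a) (ha1 : 1 < a)
    (η : ℕ → ℝ) (hη : ∀ t : ℕ, η t = 1 / (a + t))
    (h : ℕ → ℝ) (hnonneg : ∀ t, 0 ≤ h t) (h0 : h 0 = 0)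
    (hrec : ∀ t : ℕ, h (t + 1) ≤
      min ((1 - k / (2 * d)) * h t + 2 * d / k * (η t) ^ 2 * A)
        (((t : ℝ) + 1) * ∑ i ∈ Finset.range (t + 1), (η i) ^ 2 * A)) :
    ∀ t : ℕ, h t ≤ 4 * α / (α - 4) * (η t) ^ 2 * (d / k) ^ 2 * A :=
  memory_recursion_bound_general A d k hA hk hkd α ρ a hα hρ ha η hη h h0 hrec
end

section
/- Let $d, n \ge 1$ and $1 \le k \le d$ be integers, let $\Omega_k$ denote the set of all $k$-element subsets of $\{1,\dots,d\}$, and for $\omega \in \Omega_k$ let $\mathrm{rand}_k(v,\omega) \in \mathbb{R}^d$ keep the coordinates of $v$ indexed by $\omega$ and zero out the others. Let $g_1, \dots, g_n \in \mathbb{R}^d$ with $\frac{1}{n}\sum_{i=1}^n \|g_i\|^2 \le G^2$, and let $\bar{g} = \frac{1}{n}\sum_{i=1}^n g_i$. Then $\frac{1}{n\,|\Omega_k|}\sum_{i=1}^n \sum_{\omega \in \Omega_k}\Big\|\frac{d}{k}\,\mathrm{rand}_k(g_i,\omega) - \bar{g}\Big\|^2 \le \frac{d}{k}\,G^2$. 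-/
/-!
Every coordinate lies in exactly `(d-1).choose (k-1)` of the `d.choose k` subsets of size `k`,
and `d * (d-1).choose (k-1) = k * d.choose k`. Hence the estimator `(d/k) • rand_k(g i, ω)` is
unbiased (its average is `ḡ`) and its mean squared norm is `(d/k) * (1/n) * ∑ ‖g i‖²`;
the variance is this second moment minus `‖ḡ‖²`.
-/

open Finset
open scoped RealInnerProductSpace

theorem Nat.mul_choose_sub_one_eq (n k : ℕ) :
    n * (n - 1).choose k = n.choose (k + 1) * (k + 1) := by
  cases n with
  | zero => simp
  | succ n => simpa using Nat.add_one_mul_choose_eq n k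

theorem Finset.card_filter_mem_powersetCard_succ {α : Type*} [DecidableEq α] {s : Finset α}
    {j : α} (hj : j ∈ s) (k : ℕ) :
    #{ω ∈ s.powersetCard (k + 1) | j ∈ ω} = (#s - 1).choose k := by
  rw [← card_erase_of_mem hj, ← card_powersetCard]
  refine card_nbij' (·.erase j) (insert j) ?_ ?_ ?_ ?_
  · intro ω hω
    simp only [coe_filter, Set.mem_ofPred_eq, mem_powersetCard] at hω
    simp only [mem_coe, mem_powersetCard]
    exact ⟨erase_subset_erase j hω.1.1, by rw [card_erase_of_mem hω.2, hω.1.2]; rfl⟩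
  · intro ω hω
    simp only [mem_coe, mem_powersetCard, subset_erase] at hω
    simp only [coe_filter, Set.mem_ofPred_eq, mem_powersetCard, mem_insert_self, and_true]
    exact ⟨insert_subset hj hω.1.1, by rw [card_insert_of_notMem hω.1.2, hω.2]⟩
  · intro ω hω
    simp only [coe_filter, Set.mem_ofPred_eq] at hω
    exact insert_erase hω.2
  · intro ω hω
    simp only [mem_coe, mem_powersetCard, subset_erase] at hω
    exact erase_insert hω.1.2

theorem Finset.sum_norm_sub_sq_eq_of_sum_eq {ι E : Type*}
    [NormedAddCommGroup E] [InnerProductSpace ℝ E]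
    (s : Finset ι) (X : ι → E) {m : E} (hm : ∑ i ∈ s, X i = (#s : ℝ) • m) :
    ∑ i ∈ s, ‖X i - m‖ ^ 2 = ∑ i ∈ s, ‖X i‖ ^ 2 - #s * ‖m‖ ^ 2 := by
  have hinner : ∑ i ∈ s, ⟪X i, m⟫ = #s * ‖m‖ ^ 2 := by
    rw [← sum_inner, hm, real_inner_smul_left, real_inner_self_eq_norm_sq]
  simp only [norm_sub_sq_real, sum_add_distrib, sum_sub_distrib, ← mul_sum, hinner, sum_const,
    nsmul_eq_mul]
  ring

namespace EuclideanSpace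

variable {ι : Type*} [DecidableEq ι]

def coordRestrict (ω : Finset ι) (v : EuclideanSpace ℝ ι) : EuclideanSpace ℝ ι :=
  WithLp.toLp 2 fun i => if i ∈ ω then v i else 0

@[simp]
theorem coordRestrict_apply (ω : Finset ι) (v : EuclideanSpace ℝ ι) (i : ι) :
    coordRestrict ω v i = if i ∈ ω then v i else 0 := rfl

variable [Fintype ι]

theorem norm_coordRestrict_sq (ω : Finset ι) (v : EuclideanSpace ℝ ι) :
    ‖coordRestrict ω v‖ ^ 2 = ⟪coordRestrict ω v, v⟫ := by
  rw [← real_inner_self_eq_norm_sq, PiLp.inner_apply, PiLp.inner_apply]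
  refine sum_congr rfl fun i _ => ?_
  rw [coordRestrict_apply]
  split_ifs <;> simp

theorem sum_coordRestrict_powersetCard_succ (k : ℕ) (v : EuclideanSpace ℝ ι) :
    ∑ ω ∈ univ.powersetCard (k + 1), coordRestrict ω v
      = ((Fintype.card ι - 1).choose k : ℝ) • v := by
  ext j
  simp only [WithLp.ofLp_sum, Finset.sum_apply, PiLp.smul_apply, smul_eq_mul,
    coordRestrict_apply]
  rw [← sum_filter, sum_const, card_filter_mem_powersetCard_succ (mem_univ j), card_univ,
    nsmul_eq_mul]

theorem sum_norm_coordRestrict_sq_powersetCard_succ (k : ℕ) (v : EuclideanSpace ℝ ι) :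
    ∑ ω ∈ univ.powersetCard (k + 1), ‖coordRestrict ω v‖ ^ 2
      = (Fintype.card ι - 1).choose k * ‖v‖ ^ 2 := by
  simp only [norm_coordRestrict_sq, ← sum_inner, sum_coordRestrict_powersetCard_succ,
    real_inner_smul_left, real_inner_self_eq_norm_sq]

end EuclideanSpace

open EuclideanSpace

theorem randk_variance_bound_general (d n k : ℕ) (hn : 1 ≤ n) (hk : 1 ≤ k) (hkd : k ≤ d)
    (randk : EuclideanSpace ℝ (Fin d) → Finset (Fin d) → EuclideanSpace ℝ (Fin d))
    (hrandk : ∀ (v : EuclideanSpace ℝ (Fin d)) (ω : Finset (Fin d)) (i : Fin d),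
      randk v ω i = if i ∈ ω then v i else 0)
    (g : Fin n → EuclideanSpace ℝ (Fin d)) (G : ℝ)
    (hG : (1 / (n : ℝ)) * ∑ i : Fin n, ‖g i‖ ^ 2 ≤ G ^ 2)
    (gbar : EuclideanSpace ℝ (Fin d)) (hgbar : gbar = (1 / (n : ℝ)) • ∑ i : Fin n, g i) :
    (1 / ((n : ℝ) * (((Finset.univ : Finset (Fin d)).powersetCard k).card : ℝ))) *
        ∑ i : Fin n, ∑ ω ∈ (Finset.univ : Finset (Fin d)).powersetCard k,
          ‖((d : ℝ) / k) • randk (g i) ω - gbar‖ ^ 2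
      ≤ (d : ℝ) / k * G ^ 2 := by
  obtain ⟨k, rfl⟩ : ∃ j, k = j + 1 := ⟨k - 1, by omega⟩
  obtain rfl : randk = fun v ω => coordRestrict ω v := by
    funext v ω
    ext i
    rw [hrandk, coordRestrict_apply]
  set A := (univ : Finset (Fin d)).powersetCard (k + 1)
  set a : ℝ := (d : ℝ) / ↑(k + 1)
  have hA_pos : (0 : ℝ) < #A := by
    rw [card_powersetCard, card_univ, Fintype.card_fin]
    exact_mod_cast Nat.choose_pos hkd
  have hn_ne : (n : ℝ) ≠ 0 := Nat.cast_ne_zero.mpr (by omega)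
  have hscale : a * ((d - 1).choose k : ℝ) = #A := by
    rw [card_powersetCard, card_univ, Fintype.card_fin, div_mul_eq_mul_div,
      div_eq_iff (by positivity)]
    exact_mod_cast Nat.mul_choose_sub_one_eq d k
  have hunbiased (v : EuclideanSpace ℝ (Fin d)) :
      ∑ ω ∈ A, a • coordRestrict ω v = (#A : ℝ) • v := by
    rw [← smul_sum, sum_coordRestrict_powersetCard_succ, Fintype.card_fin, smul_smul, hscale]
  have hsecond (v : EuclideanSpace ℝ (Fin d)) :
      ∑ ω ∈ A, ‖a • coordRestrict ω v‖ ^ 2 = a * #A * ‖v‖ ^ 2 := by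
    simp only [norm_smul, mul_pow, Real.norm_eq_abs, sq_abs, ← mul_sum]
    rw [sum_norm_coordRestrict_sq_powersetCard_succ, Fintype.card_fin, ← hscale]
    ring
  set P := (univ : Finset (Fin n)) ×ˢ A
  have hmean : ∑ p ∈ P, a • coordRestrict p.2 (g p.1) = (#P : ℝ) • gbar := by
    rw [sum_product, card_product, card_univ, Fintype.card_fin, hgbar, smul_smul]
    simp only [hunbiased, ← smul_sum]
    congr 1
    field_simp
    push_cast
    ring
  calc _ = 1 / (n * #A) * ∑ p ∈ P, ‖a • coordRestrict p.2 (g p.1) - gbar‖ ^ 2 := by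
        rw [sum_product]
    _ ≤ 1 / (n * #A) * ∑ p ∈ P, ‖a • coordRestrict p.2 (g p.1)‖ ^ 2 := by
        rw [sum_norm_sub_sq_eq_of_sum_eq _ _ hmean]
        gcongr
        exact sub_le_self _ (by positivity)
    _ = a * (1 / n * ∑ i, ‖g i‖ ^ 2) := by
        rw [sum_product]
        simp only [hsecond, ← mul_sum]
        field_simp
    _ ≤ a * G ^ 2 := by gcongr

/-- Variance bound from Section 2.2: for vectors `g_1, …, g_n` with average squared norm at
most `G²` and mean `ḡ`, the unbiased sparsified estimator `(d/k) rand_k(g_i, ω)` (uniform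
random index `i` and uniform random `k`-subset `ω`) has variance at most `(d/k) G²`. -/
theorem randk_variance_bound (d n k : ℕ) (hd : 1 ≤ d) (hn : 1 ≤ n) (hk : 1 ≤ k) (hkd : k ≤ d)
    (randk : EuclideanSpace ℝ (Fin d) → Finset (Fin d) → EuclideanSpace ℝ (Fin d))
    (hrandk : ∀ (v : EuclideanSpace ℝ (Fin d)) (ω : Finset (Fin d)) (i : Fin d),
      randk v ω i = if i ∈ ω then v i else 0)
    (g : Fin n → EuclideanSpace ℝ (Fin d)) (G : ℝ)
    (hG : (1 / (n : ℝ)) * ∑ i : Fin n, ‖g i‖ ^ 2 ≤ G ^ 2)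
    (gbar : EuclideanSpace ℝ (Fin d)) (hgbar : gbar = (1 / (n : ℝ)) • ∑ i : Fin n, g i) :
    (1 / ((n : ℝ) * (((Finset.univ : Finset (Fin d)).powersetCard k).card : ℝ))) *
        ∑ i : Fin n, ∑ ω ∈ (Finset.univ : Finset (Fin d)).powersetCard k,
          ‖((d : ℝ) / k) • randk (g i) ω - gbar‖ ^ 2
      ≤ (d : ℝ) / k * G ^ 2 :=
  randk_variance_bound_general d n k hn hk hkd randk hrandk g G hG gbar hgbar
end
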